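/- For every rooted graph G with root v and every real x > 2, letting y = x/2 - √(x²/4 - 1), the following are equivalent: λ₁(G, 0^∞) > -x, and the matrix A_G + xI - y·E_{v,v} is positive definite, where A_G is the adjacency matrix of G and E_{v,v} is the matrix whose only nonzero entry is a 1 in position (v,v). -/

import Mathlib

/-- A rooted graph: a finite simple graph with a distinguished root vertex. -/
structure RootedGraph where
  V : Type
  [fintypeV : Fintype V]
  G : SimpleGraph V
  root : V

attribute [instance] RootedGraph.fintypeV

/-- One-step extension of a rooted graph: attach a new path vertex (the new root)
to the old root, together with a clique of `k` new vertices each adjacent to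
both the old root and the new path vertex. -/
def RootedGraph.extend (F : RootedGraph) (k : ℕ) : RootedGraph where
  V := F.V ⊕ Option (Fin k)
  G :=
    { Adj := fun a b =>
        match a, b with
        | Sum.inl u, Sum.inl w => F.G.Adj u w
        | Sum.inl u, Sum.inr _ => u = F.root
        | Sum.inr _, Sum.inl w => w = F.root
        | Sum.inr x, Sum.inr y => x ≠ y
      symm := by
        constructor
        rintro (u | x) (w | y) h
        · exact F.G.adj_symm h
        · exact h
        · exact h
        · exact h.symm
      loopless := by
        constructor
        rintro (u | x) h
        · exact F.G.irrefl h
        · exact h rfl }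
  root := Sum.inr none

/-- The rowing graph `(F, a)`. -/
def RootedGraph.rowing (F : RootedGraph) (a : List ℕ) : RootedGraph :=
  a.foldl RootedGraph.extend F

open scoped Classical in
/-- Adjacency matrix of (the graph of) a rooted graph. -/
noncomputable def RootedGraph.adjMat (F : RootedGraph) : Matrix F.V F.V ℝ :=
  Matrix.of fun u v => if F.G.Adj u v then 1 else 0

/-- The smallest adjacency eigenvalue of a rooted graph. -/
noncomputable def RootedGraph.lam1 (F : RootedGraph) : ℝ :=
  sInf {t : ℝ | ∃ x : F.V → ℝ, x ≠ 0 ∧ F.adjMat.mulVec x = t • x}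

/-!
Completing the square in the coordinate of the new root (a Schur complement) shows that on
`(F, 0)` the matrix `A + xI - tE_{root}` is positive definite iff `A_F + xI - (x - t)⁻¹E_{root}`
is. Iterating, `A + xI` is positive definite on `(G, 0ⁿ)` iff `A_G + xI - yₙE_{v,v}` is, where
`y₀ = 0` and `yₙ₊₁ = 1/(x - yₙ)`. For `x > 2` the `yₙ` converge from below to the smaller fixed
point `y = x/2 - √(x²/4 - 1)` of `t ↦ 1/(x - t)`, and `λ₁ > -x` is equivalent to positive
definiteness of `A + xI`. Both directions then follow by moving `x` slightly: positive
definiteness is an open condition, and `y` depends continuously and strictly decreasingly on `x`.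
-/

open Matrix Filter Topology

namespace Matrix

theorem sq_apply_le_dotProduct_self {n : Type*} [Fintype n] (u : n → ℝ) (i : n) :
    u i ^ 2 ≤ u ⬝ᵥ u := by
  simpa [sq, dotProduct] using
    Finset.single_le_sum (fun j _ => mul_self_nonneg (u j)) (Finset.mem_univ i)

theorem setOf_mulVec_eq_smul_eq_spectrum {K n : Type*} [Field K] [Fintype n] [DecidableEq n]
    (A : Matrix n n K) : {t : K | ∃ v : n → K, v ≠ 0 ∧ A *ᵥ v = t • v} = spectrum K A := by
  ext t
  rw [← spectrum_toLin', Set.mem_ofPred_eq, ← Module.End.hasEigenvalue_iff_mem_spectrum,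
    Module.End.hasEigenvalue_iff, Submodule.ne_bot_iff]
  simp [and_comm]

variable {n : Type*} [Fintype n] [DecidableEq n] {A : Matrix n n ℝ}

theorem IsHermitian.posDef_iff_forall_mem_spectrum_pos (hA : A.IsHermitian) :
    A.PosDef ↔ ∀ t ∈ spectrum ℝ A, 0 < t := by
  simp [hA.posDef_iff_eigenvalues_pos, hA.spectrum_real_eq_range_eigenvalues]

theorem IsHermitian.posDef_add_smul_one_iff (hA : A.IsHermitian) (c : ℝ) :
    (A + c • 1).PosDef ↔ ∀ t ∈ spectrum ℝ A, -c < t := by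
  have hAc : (A + c • 1).IsHermitian := hA.add (isHermitian_one.smul (IsSelfAdjoint.all c))
  rw [hAc.posDef_iff_forall_mem_spectrum_pos, ← Algebra.algebraMap_eq_smul_one, add_comm,
    ← spectrum.singleton_add_eq]
  simp only [Set.singleton_add, Set.forall_mem_image, neg_lt_iff_pos_add']

theorem IsHermitian.neg_lt_sInf_spectrum_iff [Nonempty n] (hA : A.IsHermitian) (c : ℝ) :
    -c < sInf (spectrum ℝ A) ↔ (A + c • 1).PosDef := by
  rw [hA.posDef_add_smul_one_iff, A.finite_real_spectrum.lt_csInf_iff]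
  rw [hA.spectrum_real_eq_range_eigenvalues]
  exact Set.range_nonempty _

theorem PosDef.exists_pos_posDef_sub_smul_one (hA : A.PosDef) :
    ∃ ε > (0 : ℝ), (A - ε • 1).PosDef := by
  have hpos := hA.isHermitian.posDef_iff_forall_mem_spectrum_pos.1 hA
  have hε : ∀ᶠ ε in 𝓝 (0 : ℝ), ∀ t ∈ spectrum ℝ A, ε < t :=
    A.finite_real_spectrum.eventually_all.2 fun t ht => eventually_lt_nhds (hpos t ht)
  obtain ⟨ε, hεA, hε0⟩ :=
    ((hε.filter_mono nhdsWithin_le_nhds).and (self_mem_nhdsWithin (s := Set.Ioi 0))).exists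
  refine ⟨ε, hε0, ?_⟩
  rw [sub_eq_add_neg, ← neg_smul, hA.isHermitian.posDef_add_smul_one_iff]
  simpa using hεA

end Matrix

noncomputable def rootWeightLimit (x : ℝ) : ℝ := x / 2 - √(x ^ 2 / 4 - 1)

noncomputable def rootWeight (x : ℝ) : ℕ → ℝ
  | 0 => 0
  | n + 1 => (x - rootWeight x n)⁻¹

section RootWeight

variable {x : ℝ}

theorem sub_rootWeightLimit (x : ℝ) : x - rootWeightLimit x = x / 2 + √(x ^ 2 / 4 - 1) := by
  rw [rootWeightLimit]
  ring

theorem one_le_sub_rootWeightLimit (hx : 2 ≤ x) : 1 ≤ x - rootWeightLimit x := by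
  rw [sub_rootWeightLimit]
  linarith [Real.sqrt_nonneg (x ^ 2 / 4 - 1)]

theorem rootWeightLimit_mul_sub (hx : 2 ≤ x) :
    rootWeightLimit x * (x - rootWeightLimit x) = 1 := by
  have hs := Real.sq_sqrt (show 0 ≤ x ^ 2 / 4 - 1 by nlinarith)
  rw [sub_rootWeightLimit, rootWeightLimit]
  linear_combination -hs

theorem rootWeightLimit_eq_inv (hx : 2 ≤ x) : rootWeightLimit x = (x - rootWeightLimit x)⁻¹ :=
  eq_inv_of_mul_eq_one_left (rootWeightLimit_mul_sub hx)

theorem rootWeightLimit_pos (hx : 2 ≤ x) : 0 < rootWeightLimit x := by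
  rw [rootWeightLimit_eq_inv hx]
  exact inv_pos.2 (one_pos.trans_le (one_le_sub_rootWeightLimit hx))

theorem rootWeightLimit_lt_one (hx : 2 < x) : rootWeightLimit x < 1 := by
  rw [rootWeightLimit_eq_inv hx.le, sub_rootWeightLimit]
  exact inv_lt_one_of_one_lt₀ (by linarith [Real.sqrt_nonneg (x ^ 2 / 4 - 1)])

theorem strictAntiOn_rootWeightLimit : StrictAntiOn rootWeightLimit (Set.Ici 2) := by
  rintro a (ha : 2 ≤ a) b (hb : 2 ≤ b) hab
  rw [rootWeightLimit_eq_inv hb, rootWeightLimit_eq_inv ha, sub_rootWeightLimit,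
    sub_rootWeightLimit]
  have ha₀ : 0 ≤ a ^ 2 / 4 - 1 := by nlinarith
  refine inv_strictAnti₀ (by linarith [Real.sqrt_nonneg (a ^ 2 / 4 - 1)]) ?_
  gcongr

theorem continuous_rootWeightLimit : Continuous rootWeightLimit := by
  unfold rootWeightLimit
  fun_prop

theorem rootWeight_le (hx : 2 ≤ x) (n : ℕ) : rootWeight x n ≤ rootWeightLimit x := by
  induction n with
  | zero => exact (rootWeightLimit_pos hx).le
  | succ n ih =>
    rw [rootWeight, rootWeightLimit_eq_inv hx]
    exact inv_anti₀ (one_pos.trans_le (one_le_sub_rootWeightLimit hx)) (by linarith)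

theorem rootWeight_lt (hx : 2 ≤ x) (n : ℕ) : rootWeight x n < x := by
  linarith [rootWeight_le hx n, one_le_sub_rootWeightLimit hx]

theorem rootWeightLimit_sub_rootWeight_le (hx : 2 ≤ x) (n : ℕ) :
    rootWeightLimit x - rootWeight x n ≤ rootWeightLimit x ^ (n + 1) := by
  induction n with
  | zero => simp [rootWeight]
  | succ n ih =>
    set L := rootWeightLimit x
    have hL := rootWeightLimit_pos hx
    have hgap : 1 ≤ x - rootWeight x n := by
      linarith [rootWeight_le hx n, one_le_sub_rootWeightLimit hx]
    have hstep : L - rootWeight x (n + 1) = L * (L - rootWeight x n) / (x - rootWeight x n) := by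
      rw [rootWeight, eq_div_iff (by linarith)]
      field_simp
      linear_combination rootWeightLimit_mul_sub hx
    calc L - rootWeight x (n + 1) ≤ L * (L - rootWeight x n) := by
          rw [hstep]
          exact div_le_self (mul_nonneg hL.le (by linarith [rootWeight_le hx n])) hgap
      _ ≤ L * L ^ (n + 1) := by gcongr
      _ = L ^ (n + 1 + 1) := by ring

theorem tendsto_rootWeight (hx : 2 < x) :
    Tendsto (rootWeight x) atTop (𝓝 (rootWeightLimit x)) := by
  have hpow : Tendsto (fun n : ℕ => rootWeightLimit x ^ (n + 1)) atTop (𝓝 0) :=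
    (tendsto_pow_atTop_nhds_zero_of_lt_one (rootWeightLimit_pos hx.le).le
      (rootWeightLimit_lt_one hx)).comp (tendsto_add_atTop_nat 1)
  have hgap := squeeze_zero (fun n => sub_nonneg.2 (rootWeight_le hx.le n))
    (rootWeightLimit_sub_rootWeight_le hx.le) hpow
  simpa using (tendsto_const_nhds (x := rootWeightLimit x)).sub hgap

end RootWeight

namespace RootedGraph

open scoped Classical

variable (F : RootedGraph)

theorem adjMat_isHermitian : F.adjMat.IsHermitian := by
  ext i j
  simp [adjMat, F.G.adj_comm]

theorem lam1_eq_sInf_spectrum : F.lam1 = sInf (spectrum ℝ F.adjMat) := by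
  rw [lam1, setOf_mulVec_eq_smul_eq_spectrum]

theorem neg_lt_lam1_iff [Nonempty F.V] (c : ℝ) :
    -c < F.lam1 ↔ (F.adjMat + c • 1).PosDef := by
  rw [lam1_eq_sInf_spectrum, F.adjMat_isHermitian.neg_lt_sInf_spectrum_iff]

noncomputable def shiftedAdjMat (x y : ℝ) : Matrix F.V F.V ℝ :=
  F.adjMat + x • (1 : Matrix F.V F.V ℝ) - y • Matrix.single F.root F.root 1

variable {F}

theorem shiftedAdjMat_zero (x : ℝ) : F.shiftedAdjMat x 0 = F.adjMat + x • 1 := by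
  simp [shiftedAdjMat]

theorem shiftedAdjMat_isHermitian (x y : ℝ) : (F.shiftedAdjMat x y).IsHermitian := by
  refine (F.adjMat_isHermitian.add (isHermitian_one.smul (IsSelfAdjoint.all x))).sub
    (IsHermitian.smul ?_ (IsSelfAdjoint.all y))
  rw [← diagonal_single]
  exact isHermitian_diagonal _

theorem dotProduct_shiftedAdjMat_mulVec (x y : ℝ) (u : F.V → ℝ) :
    u ⬝ᵥ (F.shiftedAdjMat x y *ᵥ u) =
      u ⬝ᵥ (F.adjMat *ᵥ u) + x * (u ⬝ᵥ u) - y * u F.root ^ 2 := by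
  simp [shiftedAdjMat, sub_mulVec, add_mulVec, smul_mulVec, dotProduct_sub, dotProduct_add,
    single_mulVec_eq, sq]
  ring

theorem shiftedAdjMat_posDef_iff {x y : ℝ} :
    (F.shiftedAdjMat x y).PosDef ↔ ∀ u ≠ 0, 0 < u ⬝ᵥ (F.shiftedAdjMat x y *ᵥ u) := by
  simp only [posDef_iff_dotProduct_mulVec, shiftedAdjMat_isHermitian, star_trivial, true_and]

theorem shiftedAdjMat_posDef_mono {x x' y y' : ℝ} (hx : x ≤ x') (hy : y' ≤ y)
    (h : (F.shiftedAdjMat x y).PosDef) : (F.shiftedAdjMat x' y').PosDef := by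
  refine shiftedAdjMat_posDef_iff.2 fun u hu => ?_
  have hpos := shiftedAdjMat_posDef_iff.1 h u hu
  rw [dotProduct_shiftedAdjMat_mulVec] at hpos ⊢
  have huu : 0 ≤ u ⬝ᵥ u := by simpa using dotProduct_self_star_nonneg u
  nlinarith [mul_le_mul_of_nonneg_right hx huu,
    mul_le_mul_of_nonneg_right hy (sq_nonneg (u F.root))]

theorem sum_extend_zero (f : (F.extend 0).V → ℝ) :
    ∑ i, f i = ∑ a, f (Sum.inl a) + f (Sum.inr none) :=
  (Fintype.sum_sum_type f).trans (by simp; rfl)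

theorem dotProduct_self_extend_zero (u : (F.extend 0).V → ℝ) :
    u ⬝ᵥ u = (fun a => u (Sum.inl a)) ⬝ᵥ (fun a => u (Sum.inl a)) + u (Sum.inr none) ^ 2 := by
  simp only [dotProduct, sum_extend_zero, sq]

theorem dotProduct_adjMat_extend_zero (u : (F.extend 0).V → ℝ) :
    u ⬝ᵥ ((F.extend 0).adjMat *ᵥ u) =
      (fun a => u (Sum.inl a)) ⬝ᵥ (F.adjMat *ᵥ (fun a => u (Sum.inl a))) +
        2 * u (Sum.inr none) * u (Sum.inl F.root) := by
  have hll : ∀ a b, (F.extend 0).adjMat (.inl a) (.inl b) = F.adjMat a b := fun _ _ => rfl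
  have hlr : ∀ a, (F.extend 0).adjMat (.inl a) (.inr none) = if a = F.root then 1 else 0 :=
    fun _ => rfl
  have hrl : ∀ a, (F.extend 0).adjMat (.inr none) (.inl a) = if a = F.root then 1 else 0 :=
    fun _ => rfl
  have hrr : (F.extend 0).adjMat (.inr none) (.inr none) = 0 := if_neg fun h => h rfl
  simp only [dotProduct, mulVec, sum_extend_zero, hll, hlr, hrl, hrr, mul_add,
    Finset.sum_add_distrib, mul_zero, add_zero, ite_mul, mul_ite, one_mul, zero_mul, mul_zero]
  simp only [Finset.sum_ite_eq', Finset.mem_univ, if_true]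
  rw [add_assoc]
  congr 1
  ring

theorem extend_zero_shiftedAdjMat_posDef_iff {x y : ℝ} (hxy : y < x) :
    ((F.extend 0).shiftedAdjMat x y).PosDef ↔ (F.shiftedAdjMat x (x - y)⁻¹).PosDef := by
  have hxy' : 0 < x - y := sub_pos.2 hxy
  have key : ∀ u : (F.extend 0).V → ℝ, u ⬝ᵥ ((F.extend 0).shiftedAdjMat x y *ᵥ u) =
      (fun a => u (Sum.inl a)) ⬝ᵥ (F.shiftedAdjMat x (x - y)⁻¹ *ᵥ (fun a => u (Sum.inl a))) +
        (x - y) * (u (Sum.inr none) + u (Sum.inl F.root) / (x - y)) ^ 2 := fun u => by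
    rw [dotProduct_shiftedAdjMat_mulVec, dotProduct_shiftedAdjMat_mulVec,
      dotProduct_adjMat_extend_zero, dotProduct_self_extend_zero]
    change _ + _ - y * u (Sum.inr none) ^ 2 = _
    field_simp
    ring
  constructor
  · refine fun h => shiftedAdjMat_posDef_iff.2 fun w hw => ?_
    let u : (F.extend 0).V → ℝ := Sum.elim w fun _ => -w F.root / (x - y)
    have hu : u ≠ 0 := fun h0 => hw (funext fun a => congrFun h0 (Sum.inl a))
    have hpos := shiftedAdjMat_posDef_iff.1 h u hu
    rw [key] at hpos
    convert hpos using 1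
    simp [u, neg_div]
  · refine fun h => shiftedAdjMat_posDef_iff.2 fun u hu => ?_
    rw [key]
    by_cases hw : (fun a => u (Sum.inl a)) = 0
    · have hs : u (Sum.inr none) ≠ 0 := fun hs => hu <| by
        funext i
        rcases i with a | (_ | ⟨_, ⟨⟩⟩)
        exacts [congrFun hw a, hs]
      simpa [hw, congrFun hw F.root, hxy'] using sq_pos_of_ne_zero hs
    · exact add_pos_of_pos_of_nonneg (shiftedAdjMat_posDef_iff.1 h _ hw) (by positivity)

theorem exists_shiftedAdjMat_posDef_sub_add {x y : ℝ} (h : (F.shiftedAdjMat x y).PosDef) :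
    ∃ ε > (0 : ℝ), (F.shiftedAdjMat (x - ε) (y + ε)).PosDef := by
  obtain ⟨δ, hδ, hpd⟩ := h.exists_pos_posDef_sub_smul_one
  have hsub : F.shiftedAdjMat x y - δ • 1 = F.shiftedAdjMat (x - δ) y := by
    simp only [shiftedAdjMat, sub_smul]
    abel
  refine ⟨δ / 2, half_pos hδ, shiftedAdjMat_posDef_iff.2 fun u hu => ?_⟩
  have hpos := shiftedAdjMat_posDef_iff.1 (hsub ▸ hpd) u hu
  rw [dotProduct_shiftedAdjMat_mulVec] at hpos ⊢
  nlinarith [sq_apply_le_dotProduct_self u F.root]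

theorem rowing_cons (a : ℕ) (l : List ℕ) : F.rowing (a :: l) = (F.extend a).rowing l := rfl

instance nonempty_rowing [Nonempty F.V] (l : List ℕ) : Nonempty (F.rowing l).V := by
  induction l generalizing F with
  | nil => assumption
  | cons a l ih =>
    have : Nonempty (F.extend a).V := ⟨Sum.inr none⟩
    exact ih

theorem rowing_replicate_shiftedAdjMat_posDef_iff {x : ℝ} (hx : 2 ≤ x) (n : ℕ) :
    ((F.rowing (List.replicate n 0)).shiftedAdjMat x 0).PosDef ↔
      (F.shiftedAdjMat x (rootWeight x n)).PosDef := by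
  induction n generalizing F with
  | zero => rfl
  | succ n ih =>
    rw [List.replicate_succ, rowing_cons, ih,
      extend_zero_shiftedAdjMat_posDef_iff (rootWeight_lt hx n)]
    rfl

theorem neg_lt_lam1_rowing_replicate_succ_iff {x : ℝ} (hx : 2 ≤ x) (n : ℕ) :
    -x < (F.rowing (List.replicate (n + 1) 0)).lam1 ↔
      (F.shiftedAdjMat x (rootWeight x (n + 1))).PosDef := by
  have : Nonempty (F.extend 0).V := ⟨Sum.inr none⟩
  have : Nonempty (F.rowing (List.replicate (n + 1) 0)).V := nonempty_rowing (F := F.extend 0) _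
  rw [neg_lt_lam1_iff, ← shiftedAdjMat_zero, rowing_replicate_shiftedAdjMat_posDef_iff hx]

end RootedGraph

open scoped Classical in
/-- For every rooted graph `G` with root `v` and every real `x > 2`, with
`y = x/2 - √(x²/4 - 1)`: `λ₁(G, 0^∞) > -x` if and only if `A_G + xI - yE_{v,v}` is
positive definite. -/
theorem lam1_rowing_limit_gt_iff_posDef (G : RootedGraph) (x : ℝ) (hx : 2 < x)
    (y : ℝ) (hy : y = x / 2 - Real.sqrt (x ^ 2 / 4 - 1)) (L : ℝ)
    (hL : Filter.Tendsto (fun n : ℕ => (G.rowing (List.replicate n 0)).lam1)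
      Filter.atTop (nhds L)) :
    -x < L ↔
      (G.adjMat + x • (1 : Matrix G.V G.V ℝ) -
        y • Matrix.single G.root G.root 1).PosDef := by
  subst hy
  change -x < L ↔ (G.shiftedAdjMat x (rootWeightLimit x)).PosDef
  have hL' := (tendsto_add_atTop_iff_nat 1).2 hL
  constructor
  · intro hxL
    obtain ⟨x', hx', hx'x⟩ := exists_between (max_lt hx (neg_lt.1 hxL))
    have h2x' : 2 < x' := (le_max_left _ _).trans_lt hx'
    have hposDef : ∀ᶠ n in atTop, (G.shiftedAdjMat x' (rootWeight x' (n + 1))).PosDef :=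
      (hL'.eventually (eventually_gt_nhds (neg_lt.1 ((le_max_right _ _).trans_lt hx')))).mono
        fun n => (G.neg_lt_lam1_rowing_replicate_succ_iff h2x'.le n).1
    have hweight : ∀ᶠ n in atTop, rootWeightLimit x < rootWeight x' (n + 1) :=
      ((tendsto_rootWeight h2x').comp (tendsto_add_atTop_nat 1)).eventually
        (eventually_gt_nhds (strictAntiOn_rootWeightLimit h2x'.le hx.le hx'x))
    obtain ⟨n, hn, hwn⟩ := (hposDef.and hweight).exists
    exact RootedGraph.shiftedAdjMat_posDef_mono hx'x.le hwn.le hn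
  · intro hpd
    obtain ⟨ε, hε, hpdε⟩ := G.exists_shiftedAdjMat_posDef_sub_add hpd
    have hnear : ∀ᶠ s in 𝓝 x,
        2 < s ∧ x - ε < s ∧ rootWeightLimit s < rootWeightLimit x + ε :=
      (eventually_gt_nhds hx).and <| (eventually_gt_nhds (sub_lt_self x hε)).and <|
        continuous_rootWeightLimit.continuousAt.eventually
          (eventually_lt_nhds (lt_add_of_pos_right _ hε))
    obtain ⟨x', ⟨h2x', hεx', hLx'⟩, hx'x⟩ :=
      ((hnear.filter_mono nhdsWithin_le_nhds).and (self_mem_nhdsWithin (s := Set.Iio x))).exists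
    have hpd' := RootedGraph.shiftedAdjMat_posDef_mono hεx'.le hLx'.le hpdε
    have hlam (n : ℕ) : -x' < (G.rowing (List.replicate (n + 1) 0)).lam1 :=
      (G.neg_lt_lam1_rowing_replicate_succ_iff h2x'.le n).2
        (RootedGraph.shiftedAdjMat_posDef_mono le_rfl (rootWeight_le h2x'.le _) hpd')
    linarith [ge_of_tendsto' hL' fun n => (hlam n).le, hx'x]
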